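/- arXiv:1812.04224 — 3 statements merged into one kernel-verified Lean document; each statement's English description precedes it below -/
import Mathlib

section
/- Let $n \ge 1$ and $1 \le k \le n$. Let $X = [X_0, X_1]$ and $Y = [Y_0, Y_1]$ be two $n \times n$ real orthogonal matrices, where $X_0, Y_0 \in \mathbb{R}^{n \times k}$ consist of the first $k$ columns of $X$ and $Y$ respectively, and $X_1, Y_1 \in \mathbb{R}^{n \times (n-k)}$ consist of the remaining $n-k$ columns. Then $\|X_0 X_0^T - Y_0 Y_0^T\|_2 = \|X_0^T Y_1\|_2$, where $\|\cdot\|_2$ denotes the spectral (operator) norm. -/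
open Matrix BigOperators

/-- Spectral (operator) norm of a real matrix: the operator norm of the induced
linear map between Euclidean spaces, i.e. the largest singular value. -/
noncomputable def spec {m n : ℕ} (A : Matrix (Fin m) (Fin n) ℝ) : ℝ :=
  ‖LinearMap.toContinuousLinearMap (Matrix.toEuclideanLin A)‖

/-- The submatrix consisting of the first `k` columns of an `n × n` matrix. -/
def firstCols {n : ℕ} (X : Matrix (Fin n) (Fin n) ℝ) (k : ℕ) : Matrix (Fin n) (Fin k) ℝ :=
  Matrix.of fun r j => if h : j.1 < n then X r ⟨j.1, h⟩ else 0

/-- The submatrix consisting of the last `n - a` columns (columns `a+1, …, n`)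
of an `n × n` matrix. -/
def lastCols {n : ℕ} (X : Matrix (Fin n) (Fin n) ℝ) (a : ℕ) : Matrix (Fin n) (Fin (n - a)) ℝ :=
  Matrix.of fun r j => if h : a + j.1 < n then X r ⟨a + j.1, h⟩ else 0

/-!
Write `P = [X₀ X₁]`, `Q = [Y₀ Y₁]` and `E = diag(I_k, 0)`, so that
`X₀ X₀ᵀ - Y₀ Y₀ᵀ = P E Pᵀ - Q E Qᵀ`. Multiplying by the orthogonal matrices `Pᵀ` on the left and
`Q` on the right does not change the spectral norm, and turns this matrix into the commutator
`E W - W E` of `E` with the orthogonal matrix `W = Pᵀ Q = [[A, B], [C, D]]`, that is into the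
antidiagonal block matrix `[[0, B], [-C, 0]]`, whose norm is `max ‖B‖ ‖C‖`, where `B = X₀ᵀ Y₁`.
Orthogonality of `W` gives `B Bᵀ = I - A Aᵀ` and `Cᵀ C = I - Aᵀ A`. The symmetric matrices
`A Aᵀ` and `Aᵀ A` have the same characteristic polynomial, hence are orthogonally similar, so
`‖B‖² = ‖C‖²`.
-/

open scoped Matrix.Norms.L2Operator

namespace Matrix

variable {𝕜 : Type*} [RCLike 𝕜] {l m n : Type*} [Fintype l] [Fintype m] [Fintype n]

lemma l2_opNorm_one_le [DecidableEq n] : ‖(1 : Matrix n n 𝕜)‖ ≤ 1 := by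
  rw [← diagonal_one, l2_opNorm_diagonal]
  exact (pi_norm_const_le (1 : 𝕜)).trans norm_one.le

lemma l2_opNorm_eq_of_conjTranspose_mul_self_eq [DecidableEq n] {U : Matrix m n 𝕜}
    {V : Matrix l n 𝕜} (h : Uᴴ * U = Vᴴ * V) : ‖U‖ = ‖V‖ := by
  have hUV := l2_opNorm_conjTranspose_mul_self U
  rw [h, l2_opNorm_conjTranspose_mul_self] at hUV
  exact (mul_self_inj (norm_nonneg _) (norm_nonneg _)).mp hUV.symm

lemma l2_opNorm_le_one_of_conjTranspose_mul_self_eq_one [DecidableEq n] {U : Matrix m n 𝕜}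
    (hU : Uᴴ * U = 1) : ‖U‖ ≤ 1 := by
  have h := l2_opNorm_conjTranspose_mul_self U
  rw [hU] at h
  nlinarith [l2_opNorm_one_le (𝕜 := 𝕜) (n := n), norm_nonneg U]

lemma l2_opNorm_mul_of_conjTranspose_mul_self_eq_one [DecidableEq l] [DecidableEq n]
    {U : Matrix m n 𝕜} (hU : Uᴴ * U = 1) (M : Matrix n l 𝕜) : ‖U * M‖ = ‖M‖ :=
  l2_opNorm_eq_of_conjTranspose_mul_self_eq <| by
    rw [conjTranspose_mul, Matrix.mul_assoc, ← Matrix.mul_assoc Uᴴ, hU, Matrix.one_mul]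

lemma l2_opNorm_mul_of_mul_conjTranspose_self_eq_one [DecidableEq l] [DecidableEq m]
    [DecidableEq n] {V : Matrix m n 𝕜} (hV : V * Vᴴ = 1) (M : Matrix l m 𝕜) :
    ‖M * V‖ = ‖M‖ := by
  rw [← l2_opNorm_conjTranspose, conjTranspose_mul,
    l2_opNorm_mul_of_conjTranspose_mul_self_eq_one (by rwa [conjTranspose_conjTranspose]),
    l2_opNorm_conjTranspose]

lemma l2_opNorm_conjTranspose_mul_mul_le [DecidableEq l] [DecidableEq n]
    {p q : Type*} [Fintype p] [Fintype q] [DecidableEq p] [DecidableEq q] {U : Matrix p l 𝕜}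
    {V : Matrix q n 𝕜} (hU : Uᴴ * U = 1) (hV : Vᴴ * V = 1) (M : Matrix p q 𝕜) :
    ‖Uᴴ * M * V‖ ≤ ‖M‖ := by
  have hU₁ : ‖Uᴴ‖ ≤ 1 := by
    rw [l2_opNorm_conjTranspose]; exact l2_opNorm_le_one_of_conjTranspose_mul_self_eq_one hU
  have hV₁ := l2_opNorm_le_one_of_conjTranspose_mul_self_eq_one hV
  calc ‖Uᴴ * M * V‖ ≤ ‖Uᴴ‖ * ‖M‖ * ‖V‖ :=
        (l2_opNorm_mul _ _).trans (by gcongr; exact l2_opNorm_mul _ _)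
    _ ≤ 1 * ‖M‖ * 1 := by gcongr
    _ = ‖M‖ := by ring

lemma l2_opNorm_conj_sub_conj [DecidableEq m] [DecidableEq n] {P Q : Matrix m n 𝕜}
    (hP : Pᴴ * P = 1) (hP' : P * Pᴴ = 1) (hQ : Qᴴ * Q = 1) (hQ' : Q * Qᴴ = 1)
    (E : Matrix n n 𝕜) :
    ‖P * E * Pᴴ - Q * E * Qᴴ‖ = ‖E * (Pᴴ * Q) - Pᴴ * Q * E‖ := by
  have hconj : Pᴴ * (P * E * Pᴴ - Q * E * Qᴴ) * Q = E * (Pᴴ * Q) - Pᴴ * Q * E := by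
    simp only [Matrix.mul_sub, Matrix.sub_mul, ← Matrix.mul_assoc, hP, Matrix.one_mul]
    simp only [Matrix.mul_assoc, hQ, Matrix.mul_one]
  rw [← hconj, l2_opNorm_mul_of_mul_conjTranspose_self_eq_one hQ',
    l2_opNorm_mul_of_conjTranspose_mul_self_eq_one (by rwa [conjTranspose_conjTranspose])]

lemma conjTranspose_mul_mem_unitaryGroup {R : Type*} [CommRing R] [StarRing R] [DecidableEq m]
    [DecidableEq n] {P Q : Matrix m n R} (hP : P * Pᴴ = 1) (hQ : Qᴴ * Q = 1) :
    Pᴴ * Q ∈ unitaryGroup n R := by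
  rw [mem_unitaryGroup_iff', star_eq_conjTranspose, conjTranspose_mul,
    conjTranspose_conjTranspose, Matrix.mul_assoc, ← Matrix.mul_assoc P, hP, Matrix.one_mul, hQ]

lemma IsHermitian.exists_conjStarAlgAut_eq_of_charpoly_eq [DecidableEq n] {A B : Matrix n n 𝕜}
    (hA : A.IsHermitian) (hB : B.IsHermitian) (h : A.charpoly = B.charpoly) :
    ∃ U : unitaryGroup n 𝕜, Unitary.conjStarAlgAut 𝕜 _ U A = B := by
  refine ⟨hB.eigenvectorUnitary * star hA.eigenvectorUnitary, ?_⟩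
  rw [Unitary.conjStarAlgAut_mul_apply, hA.conjStarAlgAut_star_eigenvectorUnitary,
    (hA.eigenvalues_eq_eigenvalues_iff hB).mpr h, ← hB.spectral_theorem]

lemma l2_opNorm_one_sub_mul_conjTranspose_self [DecidableEq n] (A : Matrix n n 𝕜) :
    ‖1 - A * Aᴴ‖ = ‖1 - Aᴴ * A‖ := by
  obtain ⟨U, hU⟩ := (isHermitian_conjTranspose_mul_self A).exists_conjStarAlgAut_eq_of_charpoly_eq
    (isHermitian_mul_conjTranspose_self A) (charpoly_mul_comm _ _)
  rw [← hU]
  nth_rw 1 [← map_one (Unitary.conjStarAlgAut 𝕜 _ U)]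
  rw [← map_sub, Unitary.conjStarAlgAut_apply, ← Unitary.coe_star,
    CStarRing.norm_mul_coe_unitary, CStarRing.norm_coe_unitary_mul]

section Blocks

variable {m₁ m₂ n₁ n₂ : Type*} [Fintype m₁] [Fintype m₂] [Fintype n₁] [Fintype n₂]

lemma mul_conjTranspose_eq_fromCols_mul_fromBlocks_mul {R : Type*} [CommRing R] [StarRing R]
    {p : Type*} [DecidableEq n₁] [DecidableEq n₂] (A₁ : Matrix p n₁ R) (A₂ : Matrix p n₂ R) :
    A₁ * A₁ᴴ = fromCols A₁ A₂ * (fromBlocks 1 0 0 0 : Matrix (n₁ ⊕ n₂) (n₁ ⊕ n₂) R) *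
      (fromCols A₁ A₂)ᴴ := by
  simp [fromCols_mul_fromBlocks, conjTranspose_fromCols_eq_fromRows_conjTranspose,
    fromCols_mul_fromRows]

lemma fromBlocks_one_zero_zero_zero_commutator {R : Type*} [Ring R] [DecidableEq m₁]
    [DecidableEq m₂] {A : Matrix m₁ m₁ R} {B : Matrix m₁ m₂ R} {C : Matrix m₂ m₁ R}
    {D : Matrix m₂ m₂ R} :
    fromBlocks 1 0 0 0 * fromBlocks A B C D - fromBlocks A B C D * fromBlocks 1 0 0 0 =
      fromBlocks 0 B (-C) 0 := by
  simp [fromBlocks_multiply, sub_eq_add_neg, fromBlocks_neg, fromBlocks_add]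

lemma l2_opNorm_fromBlocks_zero_zero_le [DecidableEq n₁] [DecidableEq n₂]
    {B : Matrix m₁ n₂ 𝕜} {C : Matrix m₂ n₁ 𝕜} {c : ℝ} (hB : ‖B‖ ≤ c) (hC : ‖C‖ ≤ c) :
    ‖fromBlocks 0 B C 0‖ ≤ c := by
  have hc : 0 ≤ c := (norm_nonneg B).trans hB
  rw [l2_opNorm_def]
  refine ContinuousLinearMap.opNorm_le_bound _ hc fun x => ?_
  set x₁ : EuclideanSpace 𝕜 n₁ := WithLp.toLp 2 (x.ofLp ∘ Sum.inl)
  set x₂ : EuclideanSpace 𝕜 n₂ := WithLp.toLp 2 (x.ofLp ∘ Sum.inr)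
  have hBx := (B.l2_opNorm_mulVec x₂).trans (mul_le_mul_of_nonneg_right hB (norm_nonneg _))
  have hCx := (C.l2_opNorm_mulVec x₁).trans (mul_le_mul_of_nonneg_right hC (norm_nonneg _))
  have hx : ‖x‖ ^ 2 = ‖x₁‖ ^ 2 + ‖x₂‖ ^ 2 := by
    simp [EuclideanSpace.norm_sq_eq, Fintype.sum_sum_type, x₁, x₂]
  have hDx : ‖toEuclideanLin (fromBlocks 0 B C 0) x‖ ^ 2 =
      ‖(EuclideanSpace.equiv m₁ 𝕜).symm (B *ᵥ x₂)‖ ^ 2 +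
        ‖(EuclideanSpace.equiv m₂ 𝕜).symm (C *ᵥ x₁)‖ ^ 2 := by
    simp [EuclideanSpace.norm_sq_eq, Fintype.sum_sum_type, x₁, x₂, fromBlocks_mulVec,
      toLpLin_apply]
  refine (sq_le_sq₀ (norm_nonneg _) (by positivity)).mp ?_
  simp only [LinearEquiv.trans_apply, LinearMap.coe_toContinuousLinearMap', hDx, mul_pow, hx]
  nlinarith [pow_le_pow_left₀ (norm_nonneg _) hBx 2, pow_le_pow_left₀ (norm_nonneg _) hCx 2]

lemma l2_opNorm_fromBlocks_zero_zero [DecidableEq m₁] [DecidableEq m₂] [DecidableEq n₁]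
    [DecidableEq n₂] (B : Matrix m₁ n₂ 𝕜) (C : Matrix m₂ n₁ 𝕜) :
    ‖fromBlocks 0 B C 0‖ = max ‖B‖ ‖C‖ := by
  refine le_antisymm (l2_opNorm_fromBlocks_zero_zero_le (le_max_left _ _) (le_max_right _ _))
    (max_le ?_ ?_)
  · have hB : B = (fromRows (1 : Matrix m₁ m₁ 𝕜) (0 : Matrix m₂ m₁ 𝕜))ᴴ * fromBlocks 0 B C 0 *
        fromRows (0 : Matrix n₁ n₂ 𝕜) (1 : Matrix n₂ n₂ 𝕜) := by
      simp [conjTranspose_fromRows_eq_fromCols_conjTranspose, fromCols_mul_fromBlocks,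
        fromCols_mul_fromRows]
    refine (congrArg norm hB).trans_le <| l2_opNorm_conjTranspose_mul_mul_le
      (by simp [conjTranspose_fromRows_eq_fromCols_conjTranspose, fromCols_mul_fromRows])
      (by simp [conjTranspose_fromRows_eq_fromCols_conjTranspose, fromCols_mul_fromRows]) _
  · have hC : C = (fromRows (0 : Matrix m₁ m₂ 𝕜) (1 : Matrix m₂ m₂ 𝕜))ᴴ * fromBlocks 0 B C 0 *
        fromRows (1 : Matrix n₁ n₁ 𝕜) (0 : Matrix n₂ n₁ 𝕜) := by
      simp [conjTranspose_fromRows_eq_fromCols_conjTranspose, fromCols_mul_fromBlocks,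
        fromCols_mul_fromRows]
    refine (congrArg norm hC).trans_le <| l2_opNorm_conjTranspose_mul_mul_le
      (by simp [conjTranspose_fromRows_eq_fromCols_conjTranspose, fromCols_mul_fromRows])
      (by simp [conjTranspose_fromRows_eq_fromCols_conjTranspose, fromCols_mul_fromRows]) _

lemma l2_opNorm_eq_of_fromBlocks_mem_unitaryGroup [DecidableEq m₁] [DecidableEq m₂]
    {A : Matrix m₁ m₁ 𝕜} {B : Matrix m₁ m₂ 𝕜} {C : Matrix m₂ m₁ 𝕜} {D : Matrix m₂ m₂ 𝕜}
    (h : fromBlocks A B C D ∈ unitaryGroup (m₁ ⊕ m₂) 𝕜) : ‖B‖ = ‖C‖ := by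
  have h₁ := Unitary.mul_star_self_of_mem h
  have h₂ := Unitary.star_mul_self_of_mem h
  simp only [star_eq_conjTranspose, fromBlocks_conjTranspose, fromBlocks_multiply,
    ← fromBlocks_one, fromBlocks_inj] at h₁ h₂
  have hB : B * Bᴴ = 1 - A * Aᴴ := eq_sub_of_add_eq' h₁.1
  have hC : Cᴴ * C = 1 - Aᴴ * A := eq_sub_of_add_eq' h₂.1
  have hBC := l2_opNorm_conjTranspose_mul_self Bᴴ
  rw [conjTranspose_conjTranspose, hB, l2_opNorm_one_sub_mul_conjTranspose_self, ← hC,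
    l2_opNorm_conjTranspose_mul_self, l2_opNorm_conjTranspose] at hBC
  exact (mul_self_inj (norm_nonneg _) (norm_nonneg _)).mp hBC.symm

end Blocks

end Matrix

section ColumnBlocks

variable {n k : ℕ}

lemma fromCols_firstCols_lastCols (hkn : k ≤ n) (X : Matrix (Fin n) (Fin n) ℝ) :
    fromCols (firstCols X k) (lastCols X k) =
      X.submatrix id (finSumFinEquiv.trans (finCongr (Nat.add_sub_cancel' hkn))) := by
  ext i (j | j)
  · simp only [fromCols_apply_inl, submatrix_apply, firstCols, of_apply, j.2.trans_le hkn,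
      dite_true]
    rfl
  · simp only [fromCols_apply_inr, submatrix_apply, lastCols, of_apply,
      show k + (j : ℕ) < n by omega, dite_true]
    rfl

lemma transpose_mul_self_fromCols_firstCols_lastCols (hkn : k ≤ n) {X : Matrix (Fin n) (Fin n) ℝ}
    (hX : Xᵀ * X = 1) :
    (fromCols (firstCols X k) (lastCols X k))ᵀ * fromCols (firstCols X k) (lastCols X k) = 1 := by
  rw [fromCols_firstCols_lastCols hkn, transpose_submatrix,
    ← submatrix_mul _ _ _ _ _ Function.bijective_id, hX, submatrix_one_equiv]

lemma mul_transpose_self_fromCols_firstCols_lastCols (hkn : k ≤ n) {X : Matrix (Fin n) (Fin n) ℝ}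
    (hX : X * Xᵀ = 1) :
    fromCols (firstCols X k) (lastCols X k) * (fromCols (firstCols X k) (lastCols X k))ᵀ = 1 := by
  rw [fromCols_firstCols_lastCols hkn, transpose_submatrix, submatrix_mul_equiv, hX,
    submatrix_id_id]

end ColumnBlocks

lemma spec_eq_l2_opNorm {m n : ℕ} (A : Matrix (Fin m) (Fin n) ℝ) : spec A = ‖A‖ := rfl

theorem stmt1_general {n k : ℕ} (hkn : k ≤ n)
    (X Y : Matrix (Fin n) (Fin n) ℝ)
    (hX : Xᵀ * X = 1) (hX' : X * Xᵀ = 1)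
    (hY : Yᵀ * Y = 1) (hY' : Y * Yᵀ = 1) :
    spec (firstCols X k * (firstCols X k)ᵀ - firstCols Y k * (firstCols Y k)ᵀ) =
      spec ((firstCols X k)ᵀ * lastCols Y k) := by
  have hP := transpose_mul_self_fromCols_firstCols_lastCols hkn hX
  have hP' := mul_transpose_self_fromCols_firstCols_lastCols hkn hX'
  have hQ := transpose_mul_self_fromCols_firstCols_lastCols hkn hY
  have hQ' := mul_transpose_self_fromCols_firstCols_lastCols hkn hY'
  simp only [← conjTranspose_eq_transpose_of_trivial] at hP hP' hQ hQ' ⊢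
  have hW := conjTranspose_mul_mem_unitaryGroup hP' hQ
  rw [conjTranspose_fromCols_eq_fromRows_conjTranspose, fromRows_mul_fromCols] at hW
  rw [spec_eq_l2_opNorm, spec_eq_l2_opNorm,
    mul_conjTranspose_eq_fromCols_mul_fromBlocks_mul _ (lastCols X k),
    mul_conjTranspose_eq_fromCols_mul_fromBlocks_mul _ (lastCols Y k),
    l2_opNorm_conj_sub_conj hP hP' hQ hQ', conjTranspose_fromCols_eq_fromRows_conjTranspose,
    fromRows_mul_fromCols, fromBlocks_one_zero_zero_zero_commutator,
    l2_opNorm_fromBlocks_zero_zero, norm_neg, ← l2_opNorm_eq_of_fromBlocks_mem_unitaryGroup hW,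
    max_self]

theorem stmt1 {n k : ℕ} (hn : 1 ≤ n) (hk : 1 ≤ k) (hkn : k ≤ n)
    (X Y : Matrix (Fin n) (Fin n) ℝ)
    (hX : Xᵀ * X = 1) (hX' : X * Xᵀ = 1)
    (hY : Yᵀ * Y = 1) (hY' : Y * Yᵀ = 1) :
    spec (firstCols X k * (firstCols X k)ᵀ - firstCols Y k * (firstCols Y k)ᵀ) =
      spec ((firstCols X k)ᵀ * lastCols Y k) :=
  stmt1_general hkn X Y hX hX' hY hY'
end

section
/- Let $n \ge 1$ and $1 \le k \le d \le n$. Let $E \in \mathbb{R}^{n \times d}$ and $\hat{E} \in \mathbb{R}^{n \times k}$ both have orthonormal columns, and let $E^{\perp} \in \mathbb{R}^{n \times (n-d)}$ be a matrix with orthonormal columns whose column space is the orthogonal complement of the column space of $E$. Then the squared PIP loss satisfies $\|E E^T - \hat{E} \hat{E}^T\|_F^2 = d - k + 2 \|\hat{E}^T E^{\perp}\|_F^2$. -/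
open Matrix BigOperators

/-- Frobenius norm of a real matrix. -/
noncomputable def frob {m n : Type*} [Fintype m] [Fintype n] (A : Matrix m n ℝ) : ℝ :=
  Real.sqrt (∑ i, ∑ j, (A i j) ^ 2)

/-!
Write `P = E Eᵀ` and `Q = Ê Êᵀ`: both are orthogonal projections, of traces `d` and `k`, so
`‖P - Q‖_F² = tr P + tr Q - 2 tr (P Q) = d + k - 2 tr (P Q)`. Since `P + E⊥ E⊥ᵀ = 1`,
`‖Êᵀ E⊥‖_F² = tr (Êᵀ (1 - P) Ê) = k - tr (P Q)`, and eliminating `tr (P Q)` gives the claim.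
-/

lemma frob_sq_eq_trace_mul_transpose {m n : Type*} [Fintype m] [Fintype n]
    (A : Matrix m n ℝ) : frob A ^ 2 = (A * Aᵀ).trace := by
  rw [frob, Real.sq_sqrt (by positivity)]
  simp [Matrix.trace, Matrix.mul_apply, sq]

section Projection

variable {R m ι : Type*} [CommRing R] [Fintype m] [Fintype ι] [DecidableEq ι]
  {E : Matrix m ι R}

lemma trace_mul_transpose_of_transpose_mul_eq_one (hE : Eᵀ * E = 1) :
    (E * Eᵀ).trace = Fintype.card ι := by
  rw [Matrix.trace_mul_comm, hE, Matrix.trace_one]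

lemma isIdempotentElem_mul_transpose_of_transpose_mul_eq_one (hE : Eᵀ * E = 1) :
    IsIdempotentElem (E * Eᵀ) := by
  rw [IsIdempotentElem, Matrix.mul_assoc, ← Matrix.mul_assoc Eᵀ, hE, Matrix.one_mul]

end Projection

lemma trace_sub_mul_sub_of_isIdempotentElem {R m : Type*} [CommRing R] [Fintype m]
    {P Q : Matrix m m R} (hP : IsIdempotentElem P) (hQ : IsIdempotentElem Q) :
    ((P - Q) * (P - Q)).trace = P.trace + Q.trace - 2 * (P * Q).trace := by
  have hexpand : (P - Q) * (P - Q) = P * P - P * Q - Q * P + Q * Q := by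
    rw [Matrix.sub_mul, Matrix.mul_sub, Matrix.mul_sub]; abel
  rw [hexpand, hP.eq, hQ.eq, Matrix.trace_add, Matrix.trace_sub, Matrix.trace_sub,
    Matrix.trace_mul_comm Q P]
  ring

theorem stmt3_general {n d k : ℕ}
    (E : Matrix (Fin n) (Fin d) ℝ) (Ehat : Matrix (Fin n) (Fin k) ℝ)
    (Eperp : Matrix (Fin n) (Fin (n - d)) ℝ)
    (hE : Eᵀ * E = 1) (hEhat : Ehatᵀ * Ehat = 1)
    (hspan : E * Eᵀ + Eperp * Eperpᵀ = 1) :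
    frob (E * Eᵀ - Ehat * Ehatᵀ) ^ 2 =
      (d : ℝ) - (k : ℝ) + 2 * frob (Ehatᵀ * Eperp) ^ 2 := by
  set P := E * Eᵀ
  set Q := Ehat * Ehatᵀ
  have hsymm : (P - Q)ᵀ = P - Q := by
    simp only [P, Q, Matrix.transpose_sub, Matrix.transpose_mul, Matrix.transpose_transpose]
  have hperp : ((Ehatᵀ * Eperp) * (Ehatᵀ * Eperp)ᵀ).trace = k - (P * Q).trace := calc
    _ = (Ehatᵀ * (1 - P) * Ehat).trace := by
      rw [← hspan, add_sub_cancel_left, Matrix.transpose_mul, Matrix.transpose_transpose]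
      simp only [Matrix.mul_assoc]
    _ = k - (P * Q).trace := by
      rw [Matrix.mul_sub, Matrix.sub_mul, Matrix.mul_one, hEhat, Matrix.trace_sub,
        Matrix.trace_one, Fintype.card_fin, Matrix.trace_mul_comm, ← Matrix.mul_assoc,
        Matrix.trace_mul_comm]
  rw [frob_sq_eq_trace_mul_transpose, frob_sq_eq_trace_mul_transpose, hsymm, hperp,
    trace_sub_mul_sub_of_isIdempotentElem
      (isIdempotentElem_mul_transpose_of_transpose_mul_eq_one hE)
      (isIdempotentElem_mul_transpose_of_transpose_mul_eq_one hEhat),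
    trace_mul_transpose_of_transpose_mul_eq_one hE,
    trace_mul_transpose_of_transpose_mul_eq_one hEhat, Fintype.card_fin, Fintype.card_fin]
  ring

theorem stmt3 {n d k : ℕ} (hk : 1 ≤ k) (hkd : k ≤ d) (hdn : d ≤ n)
    (E : Matrix (Fin n) (Fin d) ℝ) (Ehat : Matrix (Fin n) (Fin k) ℝ)
    (Eperp : Matrix (Fin n) (Fin (n - d)) ℝ)
    (hE : Eᵀ * E = 1) (hEhat : Ehatᵀ * Ehat = 1) (hEperp : Eperpᵀ * Eperp = 1)
    (horth : Eᵀ * Eperp = 0)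
    (hspan : E * Eᵀ + Eperp * Eperpᵀ = 1) :
    frob (E * Eᵀ - Ehat * Ehatᵀ) ^ 2 =
      (d : ℝ) - (k : ℝ) + 2 * frob (Ehatᵀ * Eperp) ^ 2 :=
  stmt3_general E Ehat Eperp hE hEhat hspan
end

section
/- Let $n \ge 1$ and $1 \le k \le n$. Let $X$ and $Y$ be $n \times n$ real orthogonal matrices, and let $c_1 \ge c_2 \ge \cdots \ge c_k \ge c_{k+1} = 0$ be nonnegative reals. Writing $X_{\cdot,1:i}$ for the first $i$ columns of $X$, $X_{\cdot,i+1:n}$ for the last $n-i$ columns, and $X_0 = X_{\cdot,1:k}$, $Y_0 = Y_{\cdot,1:k}$, and $C = \mathrm{diag}(c_1, \dots, c_k)$, it holds that $\|X_0 C X_0^T - Y_0 C Y_0^T\|_F \le \sqrt{2}\, \sum_{i=1}^{k} (c_i - c_{i+1})\, \|Y_{\cdot,1:i}^T\, X_{\cdot,i+1:n}\|_F$. -/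
open Matrix BigOperators

/-!
Write `Pᵢ = X Dᵢ Xᵀ` and `Qᵢ = Y Dᵢ Yᵀ`, where `Dᵢ` is the diagonal `0/1` matrix selecting the
first `i` coordinates; thus `Pᵢ = X_{·,1:i} X_{·,1:i}ᵀ`. Abel summation of the weights gives
`X₀ C X₀ᵀ - Y₀ C Y₀ᵀ = ∑ (cᵢ - cᵢ₊₁) (Pᵢ - Qᵢ)` with nonnegative coefficients, so by the triangle
inequality it suffices that `‖Pᵢ - Qᵢ‖_F = √2 ‖Y_{·,1:i}ᵀ X_{·,i+1:n}‖_F`. Both `Pᵢ` and `Qᵢ` are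
orthogonal projections of trace `i`, hence `‖Pᵢ - Qᵢ‖_F² = 2 tr (Qᵢ (1 - Pᵢ))`, and since
`1 - Pᵢ = X_{·,i+1:n} X_{·,i+1:n}ᵀ` this trace is `‖Y_{·,1:i}ᵀ X_{·,i+1:n}‖_F²`.
-/

open Finset Function

section Frobenius

variable {ι m n : Type*} [Fintype m] [Fintype n]

theorem frob_eq_sqrt_trace (A : Matrix m n ℝ) : frob A = √(trace (Aᵀ * A)) := by
  simp only [frob, trace, Matrix.diag, mul_apply, transpose_apply, sq]
  rw [Finset.sum_comm]

attribute [local instance] Matrix.frobeniusNormedAddCommGroup Matrix.frobeniusNormedSpace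

theorem frob_eq_norm (A : Matrix m n ℝ) : frob A = ‖A‖ := by
  simp [frob, frobenius_norm_def, Real.sqrt_eq_rpow]

theorem frob_sum_smul_le (s : Finset ι) {a : ι → ℝ} (ha : ∀ i ∈ s, 0 ≤ a i)
    (A : ι → Matrix m n ℝ) : frob (∑ i ∈ s, a i • A i) ≤ ∑ i ∈ s, a i * frob (A i) := by
  simp only [frob_eq_norm]
  refine (norm_sum_le _ _).trans (le_of_eq (sum_congr rfl fun i hi => ?_))
  rw [norm_smul, Real.norm_of_nonneg (ha i hi)]

end Frobenius

section Projections

variable {l m n R : Type*} [Fintype n] [CommRing R]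

theorem isSymm_mul_mul_transpose {D : Matrix n n R} (hD : D.IsSymm) (U : Matrix m n R) :
    (U * D * Uᵀ).IsSymm := by
  rw [IsSymm, transpose_mul, transpose_mul, transpose_transpose, hD.eq, Matrix.mul_assoc]

variable [DecidableEq n]

theorem trace_transpose_mul_sub_of_isIdempotentElem {P Q : Matrix n n R} (hPs : P.IsSymm)
    (hQs : Q.IsSymm) (hP : IsIdempotentElem P) (hQ : IsIdempotentElem Q)
    (htr : trace P = trace Q) :
    trace ((P - Q)ᵀ * (P - Q)) = 2 * trace (Q * (1 - P)) := by
  rw [transpose_sub, hPs.eq, hQs.eq]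
  simp only [sub_mul, mul_sub, Matrix.mul_one, hP.eq, hQ.eq, trace_sub, trace_mul_comm P Q, htr]
  ring

theorem isIdempotentElem_diagonal_indicator (s : Set n) :
    IsIdempotentElem (diagonal (s.indicator 1 : n → R)) := by
  rw [IsIdempotentElem, diagonal_mul_diagonal]
  congr 1
  ext j
  by_cases hj : j ∈ s <;> simp [hj]

variable [Fintype m]

theorem isIdempotentElem_mul_mul_transpose {U : Matrix m n R} (hU : Uᵀ * U = 1)
    {D : Matrix n n R} (hD : IsIdempotentElem D) : IsIdempotentElem (U * D * Uᵀ) := by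
  rw [IsIdempotentElem, Matrix.mul_assoc, Matrix.mul_assoc, ← Matrix.mul_assoc Uᵀ,
    ← Matrix.mul_assoc Uᵀ, hU, Matrix.one_mul, ← Matrix.mul_assoc D, hD.eq, Matrix.mul_assoc]

theorem trace_mul_mul_transpose {U : Matrix m n R} (hU : Uᵀ * U = 1) (D : Matrix n n R) :
    trace (U * D * Uᵀ) = trace D := by
  rw [trace_mul_cycle, hU, Matrix.one_mul]

theorem submatrix_mul_diagonal_mul_transpose [DecidableEq m] (X : Matrix l n R) {e : m → n}
    (he : Injective e) (d : n → R) :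
    X.submatrix id e * diagonal (d ∘ e) * (X.submatrix id e)ᵀ
      = X * diagonal ((Set.range e).indicator d) * Xᵀ := by
  ext r s
  rw [mul_apply, mul_apply]
  simp only [mul_diagonal, transpose_apply, submatrix_apply, id, Function.comp_apply]
  refine Fintype.sum_of_injective e he _ _ (fun j hj => ?_) (fun i => ?_)
  · simp [Set.indicator_of_notMem hj]
  · simp

end Projections

theorem frob_mul_diagonal_indicator_sub {m₁ m₂ n : Type*} [Fintype m₁] [Fintype m₂] [Fintype n]
    [DecidableEq m₁] [DecidableEq m₂] [DecidableEq n] {X Y : Matrix n n ℝ}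
    (hX : Xᵀ * X = 1) (hX' : X * Xᵀ = 1) (hY : Yᵀ * Y = 1)
    {e₁ : m₁ → n} (he₁ : Injective e₁) {e₂ : m₂ → n} (he₂ : Injective e₂)
    (hrange : Set.range e₂ = (Set.range e₁)ᶜ) :
    frob (X * diagonal ((Set.range e₁).indicator 1) * Xᵀ
        - Y * diagonal ((Set.range e₁).indicator 1) * Yᵀ)
      = √2 * frob ((Y.submatrix id e₁)ᵀ * X.submatrix id e₂) := by
  set D : Matrix n n ℝ := diagonal ((Set.range e₁).indicator 1)
  set B := Y.submatrix id e₁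
  set L := X.submatrix id e₂
  have hD : IsIdempotentElem D := isIdempotentElem_diagonal_indicator _
  have hDs : D.IsSymm := isSymm_diagonal _
  have hBB : B * Bᵀ = Y * D * Yᵀ := by
    have := submatrix_mul_diagonal_mul_transpose Y he₁ 1
    rwa [Pi.one_comp, diagonal_one', Matrix.mul_one] at this
  have hLL : L * Lᵀ = 1 - X * D * Xᵀ := by
    have hcompl : diagonal ((Set.range e₂).indicator 1) = 1 - D := by
      rw [hrange, Set.indicator_compl, ← diagonal_one', diagonal_sub]
      rfl
    have := submatrix_mul_diagonal_mul_transpose X he₂ 1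
    rwa [Pi.one_comp, diagonal_one', Matrix.mul_one, hcompl, Matrix.mul_sub, Matrix.sub_mul,
      Matrix.mul_one, hX'] at this
  have htrace : trace ((Bᵀ * L)ᵀ * (Bᵀ * L)) = trace (Y * D * Yᵀ * (1 - X * D * Xᵀ)) := by
    rw [transpose_mul, transpose_transpose, Matrix.mul_assoc, trace_mul_comm, ← Matrix.mul_assoc,
      Matrix.mul_assoc (B * Bᵀ), hBB, hLL]
  rw [frob_eq_sqrt_trace, frob_eq_sqrt_trace, htrace,
    trace_transpose_mul_sub_of_isIdempotentElem (isSymm_mul_mul_transpose hDs X)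
      (isSymm_mul_mul_transpose hDs Y) (isIdempotentElem_mul_mul_transpose hX hD)
      (isIdempotentElem_mul_mul_transpose hY hD)
      (by rw [trace_mul_mul_transpose hX, trace_mul_mul_transpose hY]),
    Real.sqrt_mul zero_le_two]

theorem firstCols_eq_submatrix {n i : ℕ} (X : Matrix (Fin n) (Fin n) ℝ) (hi : i ≤ n) :
    firstCols X i = X.submatrix id (Fin.castLE hi) := by
  ext r j
  exact dif_pos (j.2.trans_le hi)

theorem lastCols_eq_submatrix {n : ℕ} (X : Matrix (Fin n) (Fin n) ℝ) (i : ℕ) :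
    lastCols X i = X.submatrix id (fun j : Fin (n - i) => ⟨i + j, by omega⟩) := by
  ext r j
  simp [lastCols, show i + (j : ℕ) < n by omega]

theorem frob_firstCols_lastCols {n i : ℕ} {X Y : Matrix (Fin n) (Fin n) ℝ}
    (hX : Xᵀ * X = 1) (hX' : X * Xᵀ = 1) (hY : Yᵀ * Y = 1) (hi : i ≤ n) :
    frob (X * diagonal ({j : Fin n | (j : ℕ) < i}.indicator 1) * Xᵀ
        - Y * diagonal ({j : Fin n | (j : ℕ) < i}.indicator 1) * Yᵀ)
      = √2 * frob ((firstCols Y i)ᵀ * lastCols X i) := by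
  rw [firstCols_eq_submatrix Y hi, lastCols_eq_submatrix, ← Fin.range_castLE hi]
  refine frob_mul_diagonal_indicator_sub hX hX' hY (Fin.castLE_injective hi)
    (fun a b hab => Fin.ext (by simpa using congrArg Fin.val hab)) ?_
  ext j
  simp only [Set.mem_range, Fin.range_castLE, Set.mem_compl_iff, Set.mem_ofPred_eq, not_lt,
    Fin.ext_iff]
  exact ⟨fun ⟨a, ha⟩ => ha ▸ Nat.le_add_right _ _, fun h => ⟨⟨j - i, by omega⟩, by simp; omega⟩⟩

theorem indicator_lt_eq_sum_Icc {R : Type*} [Ring R] (n : ℕ) {k : ℕ} (c : ℕ → R)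
    (hc : c (k + 1) = 0) :
    {j : Fin n | (j : ℕ) < k}.indicator (fun j => c (j + 1))
      = ∑ i ∈ Icc 1 k, (c i - c (i + 1)) • {j : Fin n | (j : ℕ) < i}.indicator 1 := by
  ext j
  simp only [Finset.sum_apply, Pi.smul_apply, Set.indicator_apply, Set.mem_ofPred_eq,
    Pi.one_apply, smul_eq_mul, mul_ite, mul_one, mul_zero]
  rw [← sum_filter]
  split_ifs with hj
  · have hIcc : {i ∈ Icc 1 k | (j : ℕ) < i} = Icc ((j : ℕ) + 1) k := by
      ext i; simp only [mem_filter, mem_Icc]; omega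
    rw [hIcc, ← neg_inj, ← sum_neg_distrib]
    simp only [neg_sub]
    rw [sum_Icc_sub hj, hc, zero_sub]
  · refine (sum_eq_zero fun i hi => ?_).symm
    simp only [mem_filter, mem_Icc] at hi
    omega

theorem firstCols_mul_diagonal_mul_transpose_eq_sum {n k : ℕ} (X : Matrix (Fin n) (Fin n) ℝ)
    (hkn : k ≤ n) (c : ℕ → ℝ) (hc : c (k + 1) = 0) :
    firstCols X k * diagonal (fun i : Fin k => c (i + 1)) * (firstCols X k)ᵀ
      = ∑ i ∈ Icc 1 k,
          (c i - c (i + 1)) • (X * diagonal ({j : Fin n | (j : ℕ) < i}.indicator 1) * Xᵀ) := by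
  rw [firstCols_eq_submatrix X hkn]
  refine (submatrix_mul_diagonal_mul_transpose X (Fin.castLE_injective hkn)
    (fun j : Fin n => c (j + 1))).trans ?_
  rw [Fin.range_castLE, indicator_lt_eq_sum_Icc n c hc, ← diagonalAddMonoidHom_apply, map_sum,
    Finset.mul_sum, Finset.sum_mul]
  simp only [diagonalAddMonoidHom_apply, diagonal_smul, Matrix.mul_smul, Matrix.smul_mul]

theorem stmt11_general {n k : ℕ} (hkn : k ≤ n)
    (X Y : Matrix (Fin n) (Fin n) ℝ)
    (hX : Xᵀ * X = 1) (hX' : X * Xᵀ = 1)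
    (hY : Yᵀ * Y = 1)
    -- c₁ ≥ c₂ ≥ ⋯ ≥ c_k ≥ c_{k+1} = 0, nonnegative
    (c : ℕ → ℝ)
    (hc_mono : ∀ i j, 1 ≤ i → i ≤ j → j ≤ k + 1 → c j ≤ c i)
    (hc_last : c (k + 1) = 0) :
    frob (firstCols X k * Matrix.diagonal (fun i : Fin k => c (i.1 + 1)) *
            (firstCols X k)ᵀ -
          firstCols Y k * Matrix.diagonal (fun i : Fin k => c (i.1 + 1)) *
            (firstCols Y k)ᵀ) ≤
      Real.sqrt 2 * ∑ i ∈ Finset.Icc 1 k,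
        (c i - c (i + 1)) * frob ((firstCols Y i)ᵀ * lastCols X i) := by
  have hweights : ∀ i ∈ Icc 1 k, 0 ≤ c i - c (i + 1) := fun i hi => by
    obtain ⟨hi₁, hik⟩ := mem_Icc.1 hi
    exact sub_nonneg.2 (hc_mono i (i + 1) hi₁ i.le_succ (by omega))
  rw [firstCols_mul_diagonal_mul_transpose_eq_sum X hkn c hc_last,
    firstCols_mul_diagonal_mul_transpose_eq_sum Y hkn c hc_last, ← sum_sub_distrib]
  simp only [← smul_sub]
  refine (frob_sum_smul_le _ hweights _).trans_eq ?_
  rw [mul_sum]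
  refine sum_congr rfl fun i hi => ?_
  rw [frob_firstCols_lastCols hX hX' hY ((mem_Icc.1 hi).2.trans hkn), mul_left_comm]

theorem stmt11 {n k : ℕ} (hn : 1 ≤ n) (hk : 1 ≤ k) (hkn : k ≤ n)
    (X Y : Matrix (Fin n) (Fin n) ℝ)
    (hX : Xᵀ * X = 1) (hX' : X * Xᵀ = 1)
    (hY : Yᵀ * Y = 1) (hY' : Y * Yᵀ = 1)
    -- c₁ ≥ c₂ ≥ ⋯ ≥ c_k ≥ c_{k+1} = 0, nonnegative
    (c : ℕ → ℝ)
    (hc_nonneg : ∀ i, 1 ≤ i → i ≤ k → 0 ≤ c i)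
    (hc_mono : ∀ i j, 1 ≤ i → i ≤ j → j ≤ k + 1 → c j ≤ c i)
    (hc_last : c (k + 1) = 0) :
    frob (firstCols X k * Matrix.diagonal (fun i : Fin k => c (i.1 + 1)) *
            (firstCols X k)ᵀ -
          firstCols Y k * Matrix.diagonal (fun i : Fin k => c (i.1 + 1)) *
            (firstCols Y k)ᵀ) ≤
      Real.sqrt 2 * ∑ i ∈ Finset.Icc 1 k,
        (c i - c (i + 1)) * frob ((firstCols Y i)ᵀ * lastCols X i) :=
  stmt11_general hkn X Y hX hX' hY c hc_mono hc_last
end
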